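/- arXiv:2109.12934 — 6 statements merged into one kernel-verified Lean document; each statement's English description precedes it below -/
import Mathlib

section
/- Let n ≥ 2, 1 ≤ k ≤ n, and set α = (k/(n·C(n−1,k−1)))^{1/k}. Then the function v₁(r) = α·r satisfies v₁'(r) − F_{k,n}(r, v₁(r)) ≤ 0 for all r > 0, i.e. v₁ is a sub-solution of v' = F_{k,n}(r,v). -/
open Real

/-- The speed function `F_{k,n}(x,y)`. -/
noncomputable def Fkn (k n : ℕ) (x y : ℝ) : ℝ :=
  (y / x) * (1 + y ^ 2) *
    ((1 / ((n - 1).choose (k - 1) : ℝ)) * (x / y) ^ k - ((n : ℝ) - k) / k)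

/-! On a ray `y = α x` the factor `(x / y) ^ k = α⁻¹ ^ k` is constant, and the choice
`α ^ k = k / (n C)` makes the last factor of `F_{k,n}` equal to `n / k - (n - k) / k = 1`.
Hence `F_{k,n}(r, α r) = α (1 + α² r²) ≥ α = v₁'(r)`. -/

lemma Fkn_mul_left {k n : ℕ} {α r : ℝ} (hα : α ≠ 0) (hr : r ≠ 0) :
    Fkn k n r (α * r) =
      α * (1 + (α * r) ^ 2) *
        (1 / ((n - 1).choose (k - 1) : ℝ) * (α ^ k)⁻¹ - ((n : ℝ) - k) / k) := by
  have hαr : α * r / r = α := by field_simp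
  have hrα : r / (α * r) = α⁻¹ := by field_simp
  rw [Fkn, hαr, hrα, inv_pow]

lemma Fkn_mul_left_of_pow_eq {k n : ℕ} {α r : ℝ} (hk : 1 ≤ k) (hkn : k ≤ n)
    (hαk : α ^ k = k / (n * (n - 1).choose (k - 1))) (hr : r ≠ 0) :
    Fkn k n r (α * r) = α * (1 + (α * r) ^ 2) := by
  have hC : ((n - 1).choose (k - 1) : ℝ) ≠ 0 := by
    exact_mod_cast (Nat.choose_pos (by omega : k - 1 ≤ n - 1)).ne'
  have hk0 : (k : ℝ) ≠ 0 := by exact_mod_cast (by omega : k ≠ 0)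
  have hn0 : (n : ℝ) ≠ 0 := by exact_mod_cast (by omega : n ≠ 0)
  have hα : α ≠ 0 := by
    rintro rfl
    rw [zero_pow (by omega)] at hαk
    exact div_ne_zero hk0 (mul_ne_zero hn0 hC) hαk.symm
  have hbracket :
      1 / ((n - 1).choose (k - 1) : ℝ) * (α ^ k)⁻¹ - ((n : ℝ) - k) / k = 1 := by
    rw [hαk]
    field_simp
    ring
  rw [Fkn_mul_left hα hr, hbracket, mul_one]

theorem stmt1_general (n k : ℕ) (hk : 1 ≤ k) (hkn : k ≤ n)
    (α : ℝ) (hα : α = ((k : ℝ) / (n * ((n - 1).choose (k - 1) : ℝ))) ^ ((1 : ℝ) / k))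
    (v₁ : ℝ → ℝ) (hv₁ : ∀ r, v₁ r = α * r) :
    ∀ r : ℝ, 0 < r → deriv v₁ r - Fkn k n r (v₁ r) ≤ 0 := by
  intro r hr
  have hbase : (0 : ℝ) ≤ k / (n * (n - 1).choose (k - 1)) := by positivity
  have hα0 : 0 ≤ α := hα ▸ rpow_nonneg hbase _
  have hαk : α ^ k = k / (n * (n - 1).choose (k - 1)) := by
    rw [hα, one_div, rpow_inv_natCast_pow hbase (by omega)]
  have hderiv : deriv v₁ r = α := by
    rw [funext hv₁]
    simp
  rw [hderiv, hv₁, Fkn_mul_left_of_pow_eq hk hkn hαk hr.ne']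
  nlinarith [mul_nonneg hα0 (sq_nonneg (α * r))]

/-- `v₁(r) = α r` with `α = (k/(n·C(n−1,k−1)))^{1/k}` is a sub-solution
of `v' = F_{k,n}(r,v)` on `(0,∞)`. -/
theorem stmt1 (n k : ℕ) (hn : 2 ≤ n) (hk : 1 ≤ k) (hkn : k ≤ n)
    (α : ℝ) (hα : α = ((k : ℝ) / (n * ((n - 1).choose (k - 1) : ℝ))) ^ ((1 : ℝ) / k))
    (v₁ : ℝ → ℝ) (hv₁ : ∀ r, v₁ r = α * r) :
    ∀ r : ℝ, 0 < r → deriv v₁ r - Fkn k n r (v₁ r) ≤ 0 :=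
  stmt1_general n k hk hkn α hα v₁ hv₁
end

section
/- Suppose v : (0,R) → ℝ is positive and satisfies (k/(n·C(n−1,k−1)))^{1/k}·r ≤ v(r) ≤ C(n−1,k)^{−1/k}·r for all r ∈ (0,R), where n ≥ 3 and 2 ≤ k ≤ n−1. Then 0 ≤ (1/C(n−1,k−1))·(r/v(r))^k − (n−k)/k ≤ 1 for all r ∈ (0,R). Consequently any solution u of u'' = F_{k,n}(r,u') with u'(r) = v(r) has u'' ≥ 0, i.e. u is convex. -/
open Real

/-!
Write `C₁ = C(n−1,k−1)` and `C₂ = C(n−1,k)`, and `X = (r/v)^k`. Raising the barrier inequalities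
to the `k`-th power gives `C₂ ≤ X ≤ n C₁ / k`. Since `k C₂ = (n−k) C₁`, the factor
`X / C₁ − (n−k)/k` of `F_{k,n}(r,v)` then lies between `C₂/C₁ − C₂/C₁ = 0` and
`n/k − (n−k)/k = 1`; the remaining factor `(v/r)(1+v²)`
of `F_{k,n}(r,v)` is positive because `v ≥ v₁ > 0`.
-/

theorem Nat.cast_sub_div_eq_choose_div_choose {n k : ℕ} (hk : 0 < k) (hkn : k ≤ n) :
    ((n : ℝ) - k) / k = ((n - 1).choose k : ℝ) / (n - 1).choose (k - 1) := by
  obtain ⟨j, rfl⟩ := Nat.exists_eq_add_of_lt hk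
  obtain ⟨m, rfl⟩ := Nat.exists_eq_add_of_lt (Nat.lt_of_lt_of_le hk hkn)
  have hj : j ≤ m := by omega
  have hchoose : (m.choose (j + 1) : ℝ) * (j + 1) = m.choose j * (m - j) := by
    rw [← Nat.cast_sub hj]
    exact_mod_cast m.choose_succ_right_eq j
  have hpos : (0 : ℝ) < m.choose j := by exact_mod_cast Nat.choose_pos hj
  simp only [zero_add, Nat.add_sub_cancel]
  rw [div_eq_div_iff (by positivity) hpos.ne']
  push_cast
  linarith

section Barriers

variable {k : ℕ} {a r v : ℝ}

theorem rpow_one_div_mul_pow (hk : k ≠ 0) (ha : 0 ≤ a) (r : ℝ) :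
    (a ^ (1 / k : ℝ) * r) ^ k = a * r ^ k := by
  rw [mul_pow, one_div, Real.rpow_inv_natCast_pow ha hk]

theorem div_pow_le_inv_of_rpow_one_div_mul_le (hk : k ≠ 0) (ha : 0 < a) (hr : 0 ≤ r)
    (hv : 0 < v) (h : a ^ (1 / k : ℝ) * r ≤ v) : (r / v) ^ k ≤ a⁻¹ := by
  have hpow : a * r ^ k ≤ v ^ k :=
    rpow_one_div_mul_pow hk ha.le r ▸ pow_le_pow_left₀ (by positivity) h k
  rw [div_pow, div_le_iff₀ (by positivity), inv_mul_eq_div, le_div_iff₀ ha]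
  linarith

theorem le_div_pow_of_le_rpow_neg_one_div_mul (hk : k ≠ 0) (ha : 0 < a) (hv : 0 < v)
    (h : v ≤ a ^ (-1 / k : ℝ) * r) : a ≤ (r / v) ^ k := by
  rw [neg_div, Real.rpow_neg ha.le, ← Real.inv_rpow ha.le] at h
  have hpow : v ^ k ≤ a⁻¹ * r ^ k :=
    rpow_one_div_mul_pow hk (inv_nonneg.2 ha.le) r ▸ pow_le_pow_left₀ hv.le h k
  rw [div_pow, le_div_iff₀ (by positivity), ← le_inv_mul_iff₀ ha]
  exact hpow

end Barriers

noncomputable def speedFactor (k n : ℕ) (t : ℝ) : ℝ :=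
  (1 / ((n - 1).choose (k - 1) : ℝ)) * t ^ k - ((n : ℝ) - k) / k

section SpeedFactor

variable {k n : ℕ} {t : ℝ}

theorem speedFactor_nonneg (hk : 0 < k) (hkn : k ≤ n) (ht : ((n - 1).choose k : ℝ) ≤ t ^ k) :
    0 ≤ speedFactor k n t := by
  rw [speedFactor, Nat.cast_sub_div_eq_choose_div_choose hk hkn, one_div_mul_eq_div, sub_nonneg]
  exact div_le_div_of_nonneg_right ht (Nat.cast_nonneg _)

theorem speedFactor_le_one (hk : 0 < k) (hkn : k ≤ n)
    (ht : t ^ k ≤ ((k : ℝ) / (n * ((n - 1).choose (k - 1) : ℝ)))⁻¹) :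
    speedFactor k n t ≤ 1 := by
  have hC : (0 : ℝ) < (n - 1).choose (k - 1) := by exact_mod_cast Nat.choose_pos (by omega)
  have hn : (0 : ℝ) < n := by exact_mod_cast hk.trans_le hkn
  calc speedFactor k n t
      ≤ (1 / ((n - 1).choose (k - 1) : ℝ)) * ((k : ℝ) / (n * ((n - 1).choose (k - 1) : ℝ)))⁻¹
          - ((n : ℝ) - k) / k := by
        unfold speedFactor; gcongr
    _ = 1 := by field_simp; ring

end SpeedFactor

theorem Fkn_eq_mul_speedFactor (k n : ℕ) (x y : ℝ) :
    Fkn k n x y = (y / x) * (1 + y ^ 2) * speedFactor k n (x / y) :=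
  rfl

theorem Fkn_nonneg {k n : ℕ} {x y : ℝ} (hx : 0 ≤ x) (hy : 0 ≤ y)
    (h : 0 ≤ speedFactor k n (x / y)) : 0 ≤ Fkn k n x y := by
  rw [Fkn_eq_mul_speedFactor]
  exact mul_nonneg (by positivity) h

theorem stmt4_general (n k : ℕ) (hk : 2 ≤ k) (hkn : k ≤ n - 1)
    (R : ℝ) (v : ℝ → ℝ)
    (hlow : ∀ r ∈ Set.Ioo (0 : ℝ) R,
      ((k : ℝ) / (n * ((n - 1).choose (k - 1) : ℝ))) ^ ((1 : ℝ) / k) * r ≤ v r)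
    (hupp : ∀ r ∈ Set.Ioo (0 : ℝ) R,
      v r ≤ (((n - 1).choose k : ℝ)) ^ (-(1 : ℝ) / k) * r) :
    ∀ r ∈ Set.Ioo (0 : ℝ) R,
      (0 ≤ (1 / ((n - 1).choose (k - 1) : ℝ)) * (r / v r) ^ k - ((n : ℝ) - k) / k ∧
        (1 / ((n - 1).choose (k - 1) : ℝ)) * (r / v r) ^ k - ((n : ℝ) - k) / k ≤ 1) ∧
      (∀ u : ℝ → ℝ, (∀ s ∈ Set.Ioo (0 : ℝ) R, deriv u s = v s) →
        deriv (deriv u) r = Fkn k n r (deriv u r) → 0 ≤ deriv (deriv u) r) := by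
  intro r hr
  have hk0 : 0 < k := by omega
  have hkn' : k ≤ n := by omega
  have hC1 : (0 : ℝ) < (n - 1).choose (k - 1) := by exact_mod_cast Nat.choose_pos (by omega)
  have hC2 : (0 : ℝ) < (n - 1).choose k := by exact_mod_cast Nat.choose_pos hkn
  have hn : (0 : ℝ) < n := by exact_mod_cast hk0.trans_le hkn'
  have hv : 0 < v r := (mul_pos (by positivity) hr.1).trans_le (hlow r hr)
  have hlower : 0 ≤ speedFactor k n (r / v r) := speedFactor_nonneg hk0 hkn'
    (le_div_pow_of_le_rpow_neg_one_div_mul hk0.ne' hC2 hv (hupp r hr))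
  have hupper : speedFactor k n (r / v r) ≤ 1 := speedFactor_le_one hk0 hkn'
    (div_pow_le_inv_of_rpow_one_div_mul_le hk0.ne' (by positivity) hr.1.le hv (hlow r hr))
  refine ⟨⟨hlower, hupper⟩, fun u hu' hu'' => ?_⟩
  rw [hu'', hu' r hr]
  exact Fkn_nonneg hr.1.le hv.le hlower

/-- if `v` is positive on `(0,R)` and lies between the sub- and
super-solution barriers `v₁(r) = (k/(n C(n−1,k−1)))^{1/k} r` and
`v₂(r) = C(n−1,k)^{−1/k} r`, then
`0 ≤ (1/C(n−1,k−1))(r/v)^k − (n−k)/k ≤ 1`, and consequently any solution `u` of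
`u'' = F_{k,n}(r,u')` with `u' = v` has `u'' ≥ 0`, i.e. `u` is convex. -/
theorem stmt4 (n k : ℕ) (hn : 3 ≤ n) (hk : 2 ≤ k) (hkn : k ≤ n - 1)
    (R : ℝ) (v : ℝ → ℝ)
    (hpos : ∀ r ∈ Set.Ioo (0 : ℝ) R, 0 < v r)
    (hlow : ∀ r ∈ Set.Ioo (0 : ℝ) R,
      ((k : ℝ) / (n * ((n - 1).choose (k - 1) : ℝ))) ^ ((1 : ℝ) / k) * r ≤ v r)
    (hupp : ∀ r ∈ Set.Ioo (0 : ℝ) R,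
      v r ≤ (((n - 1).choose k : ℝ)) ^ (-(1 : ℝ) / k) * r) :
    ∀ r ∈ Set.Ioo (0 : ℝ) R,
      (0 ≤ (1 / ((n - 1).choose (k - 1) : ℝ)) * (r / v r) ^ k - ((n : ℝ) - k) / k ∧
        (1 / ((n - 1).choose (k - 1) : ℝ)) * (r / v r) ^ k - ((n : ℝ) - k) / k ≤ 1) ∧
      (∀ u : ℝ → ℝ, (∀ s ∈ Set.Ioo (0 : ℝ) R, deriv u s = v s) →
        deriv (deriv u) r = Fkn k n r (deriv u r) → 0 ≤ deriv (deriv u) r) :=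
  stmt4_general n k hk hkn R v hlow hupp
end

section
/- The function u(s) = ∫₀^s √(e^{r²} − 1) dr satisfies, for all s > 0, the equation ( (u'(s)/(s·√(1+u'(s)²))) · (u''(s)/(1+u'(s)²)^{3/2}) )^{1/2} = 1/√(1+u'(s)²). Equivalently, with λ₁ = u''/(1+u'²)^{3/2} and λ₂ = u'/(s√(1+u'²)), one has λ₁·λ₂ = 1/(1+u'²), so the rotationally symmetric graph of u over ℝ² is a √(S₂)-translator in ℝ³. -/
/-! Since `λ₁ λ₂ = u'' u' / (s (1 + u'²)²)`, the translator equation is the ODE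
`u'' u' = s (1 + u'²)`. For `u' = √(e^{s²} − 1)` one has `1 + u'² = e^{s²}` and
`u'' u' = (e^{s²} − 1)' / 2 = s e^{s²}`. -/

open Real intervalIntegral

lemma curvature_product_eq_of_mul_eq {s p q : ℝ} (hs : s ≠ 0) (hqp : q * p = s * (1 + p ^ 2)) :
    q / (1 + p ^ 2) ^ ((3 : ℝ) / 2) * (p / (s * √(1 + p ^ 2))) = 1 / (1 + p ^ 2) := by
  have hpos : 0 < 1 + p ^ 2 := by positivity
  have hpow : (1 + p ^ 2) ^ ((3 : ℝ) / 2) * √(1 + p ^ 2) = (1 + p ^ 2) ^ 2 := by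
    rw [sqrt_eq_rpow, ← rpow_add hpos]
    norm_num
  rw [div_mul_div_comm, mul_left_comm, hpow, hqp]
  field_simp

lemma hasDerivAt_sqrt_exp_sq_sub_one {s : ℝ} (hs : s ≠ 0) :
    HasDerivAt (fun t : ℝ => √(exp (t ^ 2) - 1)) (s * exp (s ^ 2) / √(exp (s ^ 2) - 1)) s := by
  have hE : exp (s ^ 2) - 1 ≠ 0 := by
    rw [sub_ne_zero, Ne, exp_eq_one_iff]
    positivity
  have h := (((hasDerivAt_pow 2 s).exp).sub_const 1).sqrt hE
  convert h using 1
  field_simp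
  ring

/-- `u(s) = ∫₀^s √(e^{r²} − 1) dr` satisfies, for all `s > 0`,
`λ₁ · λ₂ = 1/(1+u'(s)²)` where `λ₁ = u''/(1+u'²)^{3/2}` and `λ₂ = u'/(s√(1+u'²))`;
i.e. the rotationally symmetric graph of `u` is a `√S₂`-translator in `ℝ³`. -/
theorem stmt5 (u : ℝ → ℝ)
    (hu : ∀ s : ℝ, u s = ∫ r in (0 : ℝ)..s, Real.sqrt (Real.exp (r ^ 2) - 1)) :
    ∀ s : ℝ, 0 < s →
      (deriv (deriv u) s / (1 + deriv u s ^ 2) ^ ((3 : ℝ) / 2)) *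
        (deriv u s / (s * Real.sqrt (1 + deriv u s ^ 2))) =
      1 / (1 + deriv u s ^ 2) := by
  intro s hs
  have hu' : deriv u = fun t => √(exp (t ^ 2) - 1) := by
    rw [funext hu]
    exact funext fun t => Continuous.deriv_integral _ (by fun_prop) 0 t
  have hu'' : deriv (deriv u) s = s * exp (s ^ 2) / √(exp (s ^ 2) - 1) := by
    rw [hu']
    exact (hasDerivAt_sqrt_exp_sq_sub_one hs.ne').deriv
  have hE : 0 < exp (s ^ 2) - 1 := sub_pos.2 (one_lt_exp_iff.2 (by positivity))
  rw [hu'', hu']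
  refine curvature_product_eq_of_mul_eq hs.ne' ?_
  rw [sq_sqrt hE.le, div_mul_cancel₀ _ (sqrt_pos.2 hE).ne']
  ring
end

section
/- For n ≥ 3, the linear function w₁(r) = ((n²+n+2)/8)·r satisfies w₁'(r) − G_n(r, w₁(r)) = −((n²+n+2)/8)·w₁(r)² ≤ 0 for all r > 0, i.e. w₁ is a sub-solution of w' = G_n(r,w). -/
open Real

/-- The speed function `G_n(x,y)` for the harmonic-mean-type flow. -/
noncomputable def Gn (n : ℕ) (x y : ℝ) : ℝ :=
  (y / x) * (1 + y ^ 2) *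
    (((n : ℝ) - y / x) / (y / x - ((n : ℝ) ^ 2 - 3 * n + 2) / 4))

/-- for `n ≥ 3`, `w₁(r) = ((n²+n+2)/8) r` satisfies
`w₁'(r) − G_n(r,w₁(r)) = −((n²+n+2)/8)·w₁(r)² ≤ 0` for all `r > 0`,
i.e. `w₁` is a sub-solution of `w' = G_n(r,w)`. -/
theorem stmt10 (n : ℕ) (hn : 3 ≤ n) (w₁ : ℝ → ℝ)
    (hw₁ : ∀ r, w₁ r = (((n : ℝ) ^ 2 + n + 2) / 8) * r) :
    ∀ r : ℝ, 0 < r →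
      deriv w₁ r - Gn n r (w₁ r) = -(((n : ℝ) ^ 2 + n + 2) / 8) * (w₁ r) ^ 2 ∧
      deriv w₁ r - Gn n r (w₁ r) ≤ 0 := by
  intro r hr
  set c : ℝ := ((n : ℝ) ^ 2 + n + 2) / 8 with hc
  have hcpos : 0 < c := by
    have : (0:ℝ) ≤ (n:ℝ) := Nat.cast_nonneg n
    have := sq_nonneg (n:ℝ)
    unfold c; positivity
  have hne : (n : ℝ) ^ 2 + 2 ≠ 7 * (n : ℝ) := by
    have : n ^ 2 + 2 ≠ 7 * n := by
      rcases lt_or_ge n 8 with h | h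
      · interval_cases n <;> decide
      · nlinarith
    intro h
    exact this (by exact_mod_cast h)
  have hdenom : c - ((n : ℝ) ^ 2 - 3 * n + 2) / 4 ≠ 0 := by
    unfold c
    intro h
    apply hne
    nlinarith [h]
  have hderiv : deriv w₁ r = c := by
    have hfun : w₁ = fun r => c * r := funext hw₁
    rw [hfun]
    rw [deriv_const_mul_field]
    simp
  have hval : w₁ r = c * r := hw₁ r
  have hdiv : w₁ r / r = c := by rw [hval]; field_simp
  have hG : Gn n r (w₁ r) = c + c ^ 3 * r ^ 2 := by
    unfold Gn
    rw [hdiv, hval]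
    have hnum : (n : ℝ) - c = c - ((n : ℝ) ^ 2 - 3 * n + 2) / 4 := by
      unfold c; ring
    rw [hnum, div_self hdenom]
    ring
  refine ⟨?_, ?_⟩
  · rw [hderiv, hG, hval]; ring
  · rw [hderiv, hG]
    nlinarith [sq_nonneg (c * r), hcpos]
end

section
/- For n ≥ 3, the function w₂(r) = ((n²+5n+2)/12)·r satisfies w₂'(r) − G_n(r, w₂(r)) = ((n²+5n+2)/24)·(1 − w₂(r)²) ≥ 0 for all r ∈ (0, 12/(n²+5n+2)], i.e. w₂ is a super-solution of w' = G_n(r,w) on that interval. -/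
open Real

/-! Along the line `y = c x` the speed `G_n` only sees the slope `c`. For
`c = (n² + 5n + 2)/12` the last factor of `G_n` is exactly `1/2`, so
`c - G_n(r, c r) = (c/2)(1 - (c r)²)`, which is nonnegative as long as `c r ≤ 1`. -/

/-- Up to the factor `-1/6`, this is the denominator `c - (n² - 3n + 2)/4` of the last factor of
`G_n` at slope `c = (n² + 5n + 2)/12`. -/
theorem Int.sq_sub_seven_mul_add_two_ne_zero (n : ℤ) : n ^ 2 - 7 * n + 2 ≠ 0 := by
  rcases le_or_gt n 0 with h | h
  · nlinarith
  rcases le_or_gt 7 n with h' | h'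
  · nlinarith
  interval_cases n <;> decide

theorem Gn_mul_self (n : ℕ) (c : ℝ) {x : ℝ} (hx : x ≠ 0) :
    Gn n x (c * x) =
      c * (1 + (c * x) ^ 2) * ((n - c) / (c - ((n : ℝ) ^ 2 - 3 * n + 2) / 4)) := by
  rw [Gn, mul_div_cancel_right₀ c hx]

theorem Gn_ratio_eq_half (n : ℕ) :
    ((n : ℝ) - (n ^ 2 + 5 * n + 2) / 12) /
      ((n ^ 2 + 5 * n + 2) / 12 - ((n : ℝ) ^ 2 - 3 * n + 2) / 4) = 1 / 2 := by
  have h : ((n : ℝ) ^ 2 - 7 * n + 2) ≠ 0 := by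
    exact_mod_cast Int.sq_sub_seven_mul_add_two_ne_zero n
  rw [div_eq_iff (by contrapose! h; linarith)]
  ring

theorem slope_sub_Gn_mul_self (n : ℕ) {r : ℝ} (hr : r ≠ 0) :
    ((n : ℝ) ^ 2 + 5 * n + 2) / 12 - Gn n r ((n ^ 2 + 5 * n + 2) / 12 * r) =
      ((n : ℝ) ^ 2 + 5 * n + 2) / 24 * (1 - ((n ^ 2 + 5 * n + 2) / 12 * r) ^ 2) := by
  rw [Gn_mul_self n _ hr, Gn_ratio_eq_half]
  ring

theorem stmt11_general (n : ℕ) (w₂ : ℝ → ℝ)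
    (hw₂ : ∀ r, w₂ r = (((n : ℝ) ^ 2 + 5 * n + 2) / 12) * r) :
    ∀ r : ℝ, 0 < r → r ≤ 12 / ((n : ℝ) ^ 2 + 5 * n + 2) →
      deriv w₂ r - Gn n r (w₂ r) =
        (((n : ℝ) ^ 2 + 5 * n + 2) / 24) * (1 - (w₂ r) ^ 2) ∧
      0 ≤ deriv w₂ r - Gn n r (w₂ r) := by
  obtain rfl : w₂ = fun r => ((n : ℝ) ^ 2 + 5 * n + 2) / 12 * r := funext hw₂
  intro r hr hr'
  have hw_le_one : ((n : ℝ) ^ 2 + 5 * n + 2) / 12 * r ≤ 1 := by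
    rw [le_div_iff₀ (by positivity)] at hr'
    linarith
  rw [deriv_const_mul_field', deriv_id'']
  beta_reduce
  rw [mul_one, slope_sub_Gn_mul_self n hr.ne']
  exact ⟨rfl, mul_nonneg (by positivity) (sub_nonneg.2 (pow_le_one₀ (by positivity) hw_le_one))⟩

/-- for `n ≥ 3`, `w₂(r) = ((n²+5n+2)/12) r` satisfies
`w₂'(r) − G_n(r,w₂(r)) = ((n²+5n+2)/24)·(1 − w₂(r)²) ≥ 0` for
`r ∈ (0, 12/(n²+5n+2)]`, i.e. `w₂` is a super-solution there. -/
theorem stmt11 (n : ℕ) (hn : 3 ≤ n) (w₂ : ℝ → ℝ)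
    (hw₂ : ∀ r, w₂ r = (((n : ℝ) ^ 2 + 5 * n + 2) / 12) * r) :
    ∀ r : ℝ, 0 < r → r ≤ 12 / ((n : ℝ) ^ 2 + 5 * n + 2) →
      deriv w₂ r - Gn n r (w₂ r) =
        (((n : ℝ) ^ 2 + 5 * n + 2) / 24) * (1 - (w₂ r) ^ 2) ∧
      0 ≤ deriv w₂ r - Gn n r (w₂ r) :=
  stmt11_general n w₂ hw₂
end

section
/- Suppose n ∈ {3,4,5,6} and w : (0,R) → ℝ satisfies ((n²+n+2)/8)·r ≤ w(r) ≤ ((n²+5n+2)/12)·r for r ∈ (0,R). Then 1/2 ≤ (n − w(r)/r)/(w(r)/r − (n²−3n+2)/4) ≤ 1 for all r ∈ (0,R). In particular G_n(r,w(r)) ≥ (w(r)/(2r))(1+w(r)²) ≥ 0, so any solution u of u'' = G_n(r,u') with u' = w is convex. -/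
/-!
Write `t = w(r)/r` and `c = (n² − 3n + 2)/4`. The two barriers are exactly the points where the
ratio `(n − t)/(t − c)` equals `1` and `1/2`:
`(n² + n + 2)/8 = (n + c)/2` and `(n² + 5n + 2)/12 = (2n + c)/3`.
Both lie above `c` once `c < n`, and then the bounds are just clearing the positive denominator
`t − c`. The case `n ≤ c` cannot occur: it makes the barriers cross, and `n = c` would mean
`n² − 7n + 2 = 0`, which has no integer root.
-/

open Real

section Pinching

variable {n c t : ℝ}

theorem lt_of_pinched (hnc : n ≠ c) (hlo : (n + c) / 2 ≤ t) (hhi : t ≤ (2 * n + c) / 3) :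
    c < t := by
  have hcn : c < n := lt_of_le_of_ne (by linarith) hnc.symm
  linarith

theorem one_half_le_sub_div_sub (hct : c < t) (hhi : t ≤ (2 * n + c) / 3) :
    1 / 2 ≤ (n - t) / (t - c) := by
  rw [le_div_iff₀ (sub_pos.2 hct)]
  linarith

theorem sub_div_sub_le_one (hct : c < t) (hlo : (n + c) / 2 ≤ t) :
    (n - t) / (t - c) ≤ 1 := by
  rw [div_le_one (sub_pos.2 hct)]
  linarith

end Pinching

theorem Nat.cast_ne_sq_sub_three_mul_add_two_div_four (n : ℕ) :
    (n : ℝ) ≠ ((n : ℝ) ^ 2 - 3 * n + 2) / 4 := by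
  intro h
  have hnat : n ^ 2 + 2 = 7 * n := by
    have : (n : ℝ) ^ 2 + 2 = 7 * n := by linarith
    exact_mod_cast this
  have hn : n ≤ 7 := by nlinarith
  interval_cases n <;> omega

theorem div_two_mul_le_Gn {n : ℕ} {x y : ℝ} (hy : 0 ≤ y / x)
    (h : 1 / 2 ≤ ((n : ℝ) - y / x) / (y / x - ((n : ℝ) ^ 2 - 3 * n + 2) / 4)) :
    y / (2 * x) * (1 + y ^ 2) ≤ Gn n x y :=
  calc y / (2 * x) * (1 + y ^ 2) = y / x * (1 + y ^ 2) * (1 / 2) := by ring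
    _ ≤ Gn n x y := by unfold Gn; gcongr

theorem stmt13_general (n : ℕ) (R : ℝ) (w : ℝ → ℝ)
    (hlow : ∀ r ∈ Set.Ioo (0 : ℝ) R, (((n : ℝ) ^ 2 + n + 2) / 8) * r ≤ w r)
    (hupp : ∀ r ∈ Set.Ioo (0 : ℝ) R, w r ≤ (((n : ℝ) ^ 2 + 5 * n + 2) / 12) * r) :
    ∀ r ∈ Set.Ioo (0 : ℝ) R,
      ((1 : ℝ) / 2 ≤ ((n : ℝ) - w r / r) / (w r / r - ((n : ℝ) ^ 2 - 3 * n + 2) / 4) ∧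
        ((n : ℝ) - w r / r) / (w r / r - ((n : ℝ) ^ 2 - 3 * n + 2) / 4) ≤ 1) ∧
      (w r / (2 * r)) * (1 + w r ^ 2) ≤ Gn n r (w r) ∧
      0 ≤ (w r / (2 * r)) * (1 + w r ^ 2) ∧
      (∀ u : ℝ → ℝ, (∀ s ∈ Set.Ioo (0 : ℝ) R, deriv u s = w s) →
        deriv (deriv u) r = Gn n r (deriv u r) → 0 ≤ deriv (deriv u) r) := by
  intro r hr
  have hlo : ((n : ℝ) + ((n : ℝ) ^ 2 - 3 * n + 2) / 4) / 2 ≤ w r / r := by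
    rw [le_div_iff₀ hr.1]; linarith [hlow r hr]
  have hhi : w r / r ≤ (2 * (n : ℝ) + ((n : ℝ) ^ 2 - 3 * n + 2) / 4) / 3 := by
    rw [div_le_iff₀ hr.1]; linarith [hupp r hr]
  have hct := lt_of_pinched (Nat.cast_ne_sq_sub_three_mul_add_two_div_four n) hlo hhi
  have hhalf := one_half_le_sub_div_sub hct hhi
  have ht : 0 ≤ w r / r := by
    have : (0 : ℝ) ≤ ((n : ℝ) ^ 2 + n + 2) / 8 := by positivity
    linarith
  have hG := div_two_mul_le_Gn ht hhalf
  have hw : 0 ≤ w r / (2 * r) * (1 + w r ^ 2) := by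
    rw [mul_comm 2 r, ← div_div]
    exact mul_nonneg (div_nonneg ht zero_le_two) (by positivity)
  refine ⟨⟨hhalf, sub_div_sub_le_one hct hlo⟩, hG, hw, fun u hu hu'' => ?_⟩
  rw [hu'', hu r hr]
  exact hw.trans hG

/-- for `n ∈ {3,4,5,6}` and `w` pinched between the linear barriers
`((n²+n+2)/8) r` and `((n²+5n+2)/12) r` on `(0,R)`, one has
`1/2 ≤ (n − w/r)/(w/r − (n²−3n+2)/4) ≤ 1`; in particular
`G_n(r,w(r)) ≥ (w/(2r))(1+w²) ≥ 0`, so any solution `u` of `u'' = G_n(r,u')`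
with `u' = w` is convex. -/
theorem stmt13 (n : ℕ) (hn : 3 ≤ n) (hn' : n ≤ 6) (R : ℝ) (w : ℝ → ℝ)
    (hlow : ∀ r ∈ Set.Ioo (0 : ℝ) R, (((n : ℝ) ^ 2 + n + 2) / 8) * r ≤ w r)
    (hupp : ∀ r ∈ Set.Ioo (0 : ℝ) R, w r ≤ (((n : ℝ) ^ 2 + 5 * n + 2) / 12) * r) :
    ∀ r ∈ Set.Ioo (0 : ℝ) R,
      ((1 : ℝ) / 2 ≤ ((n : ℝ) - w r / r) / (w r / r - ((n : ℝ) ^ 2 - 3 * n + 2) / 4) ∧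
        ((n : ℝ) - w r / r) / (w r / r - ((n : ℝ) ^ 2 - 3 * n + 2) / 4) ≤ 1) ∧
      (w r / (2 * r)) * (1 + w r ^ 2) ≤ Gn n r (w r) ∧
      0 ≤ (w r / (2 * r)) * (1 + w r ^ 2) ∧
      (∀ u : ℝ → ℝ, (∀ s ∈ Set.Ioo (0 : ℝ) R, deriv u s = w s) →
        deriv (deriv u) r = Gn n r (deriv u r) → 0 ≤ deriv (deriv u) r) :=
  stmt13_general n R w hlow hupp
end
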